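/- For every n ≥ 1 and every full-rank lattice L ⊆ ℝⁿ, the Gaussian mass of L at parameter s = λ₁(L)/(2√n) satisfies ρ_s(L) ≤ 1 + 2^{−10n}. (Equivalently, the smoothing parameter of the dual lattice satisfies η_ε(L*) ≤ 2√n/λ₁(L) with ε = 2^{−10n}.) -/

import Mathlib

open Metric Submodule
noncomputable section

/-- The length of a shortest nonzero vector of a set `A`. -/
def lambda1 {E : Type*} [NormedAddCommGroup E] (A : Set E) : ℝ :=
  sInf (norm '' (A \ {0}))

/-- The Gaussian mass `ρ_s(A) = Σ_{a ∈ A} exp(−π‖a/s‖²)` of a set `A`. -/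
def gMass {E : Type*} [NormedAddCommGroup E] (s : ℝ) (A : Set E) : ℝ :=
  ∑' a : A, Real.exp (-Real.pi * (‖(a : E)‖ / s) ^ 2)

/-! Nonzero points of a discrete subgroup `L` have norm at least `λ = λ₁(L) > 0` and are pairwise
`λ`-apart. Sorting them into the shells `kλ ≤ ‖x‖ < (k + 1)λ`, a volume-packing argument bounds
the `k`-th shell by `(2k + 3)ⁿ` points, at each of which the Gaussian of parameter
`s = λ / (2√n)` is at most `exp(-4πnk²)`. Since `(2k + 3)ⁿ exp(-4πnk²) ≤ 2^(-10n-k)`, the shells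
`k ≥ 1` contribute at most `2^(-10n)` in total, and the shell `k = 0` is `{0}`. -/

open MeasureTheory Module
open scoped ENNReal

section Lambda1

variable {E : Type*} [NormedAddCommGroup E]

theorem lambda1_le_norm {A : Set E} {x : E} (hx : x ∈ A) (hx0 : x ≠ 0) : lambda1 A ≤ ‖x‖ :=
  csInf_le ⟨0, by rintro _ ⟨y, -, rfl⟩; exact norm_nonneg y⟩ ⟨x, ⟨hx, hx0⟩, rfl⟩

theorem lambda1_le_dist (L : Submodule ℤ E) {x y : E} (hx : x ∈ L) (hy : y ∈ L) (hxy : x ≠ y) :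
    lambda1 (L : Set E) ≤ dist x y := by
  rw [dist_eq_norm]
  exact lambda1_le_norm (L.sub_mem hx hy) (sub_ne_zero.2 hxy)

theorem lambda1_pos (L : Submodule ℤ E) [DiscreteTopology L] (hL : L ≠ ⊥) :
    0 < lambda1 (L : Set E) := by
  obtain ⟨x, hx, hx0⟩ := L.ne_bot_iff.1 hL
  obtain ⟨ε, hε, hball⟩ := Metric.isOpen_iff.1 (isOpen_discrete ({0} : Set L)) 0 rfl
  refine hε.trans_le (le_csInf ⟨_, x, ⟨hx, hx0⟩, rfl⟩ ?_)
  rintro _ ⟨y, ⟨hy, hy0⟩, rfl⟩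
  by_contra! hlt
  have hy_ball : (⟨y, hy⟩ : L) ∈ ball 0 ε := by simpa using hlt
  exact hy0 (congrArg Subtype.val (hball hy_ball))

end Lambda1

theorem ENNReal.tsum_le_mul_of_forall_card_le {α : Type*} {f : α → ℝ≥0∞} {N B : ℝ≥0∞}
    (hcard : ∀ F : Finset α, (F.card : ℝ≥0∞) ≤ N) (hf : ∀ a, f a ≤ B) : ∑' a, f a ≤ N * B :=
  ENNReal.summable.tsum_le_of_sum_le fun F => calc
    ∑ a ∈ F, f a ≤ ∑ _a ∈ F, B := Finset.sum_le_sum fun a _ => hf a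
    _ = F.card * B := by rw [Finset.sum_const, nsmul_eq_mul]
    _ ≤ N * B := by gcongr; exact hcard F

section FiniteDimensional

variable {E : Type*} [NormedAddCommGroup E] [NormedSpace ℝ E] [FiniteDimensional ℝ E]

theorem Finset.card_le_of_pairwise_dist_ge {F : Finset E} {δ R : ℝ} {c : E} (hδ : 0 < δ)
    (hR : 0 ≤ R) (hsep : (F : Set E).Pairwise fun x y => δ ≤ dist x y)
    (hF : (F : Set E) ⊆ closedBall c R) :
    (F.card : ℝ) ≤ (2 * R / δ + 1) ^ finrank ℝ E := by
  let _ : MeasurableSpace E := borel E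
  have _ : BorelSpace E := ⟨rfl⟩
  set μ : Measure E := Measure.addHaar
  have hr : 0 < δ / 2 := by positivity
  have hdisj : (F : Set E).PairwiseDisjoint fun x => ball x (δ / 2) := fun x hx y hy hxy =>
    ball_disjoint_ball (by linarith [hsep hx hy hxy])
  have hsub : (⋃ x ∈ F, ball x (δ / 2)) ⊆ ball c (R + δ / 2) :=
    Set.iUnion₂_subset fun x hx => ball_subset_ball' (by linarith [mem_closedBall.1 (hF hx)])
  have hvol : (F.card : ℝ≥0∞) * ENNReal.ofReal ((δ / 2) ^ finrank ℝ E) * μ (ball 0 1)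
      ≤ ENNReal.ofReal ((R + δ / 2) ^ finrank ℝ E) * μ (ball 0 1) := calc
    _ = ∑ x ∈ F, μ (ball x (δ / 2)) := by
      simp only [Measure.addHaar_ball_of_pos μ _ hr, Finset.sum_const, nsmul_eq_mul, mul_assoc]
    _ = μ (⋃ x ∈ F, ball x (δ / 2)) :=
      (measure_biUnion_finset hdisj fun _ _ => isOpen_ball.measurableSet).symm
    _ ≤ μ (ball c (R + δ / 2)) := measure_mono hsub
    _ = _ := Measure.addHaar_ball_of_pos μ _ (by positivity)
  have hcount : (F.card : ℝ) * (δ / 2) ^ finrank ℝ E ≤ (R + δ / 2) ^ finrank ℝ E := by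
    rw [ENNReal.mul_le_mul_iff_left (measure_ball_pos μ _ one_pos).ne' measure_ball_lt_top.ne,
      ← ENNReal.ofReal_natCast, ← ENNReal.ofReal_mul (by positivity)] at hvol
    exact (ENNReal.ofReal_le_ofReal_iff (by positivity)).1 hvol
  rw [show 2 * R / δ + 1 = (R + δ / 2) / (δ / 2) by field_simp, div_pow,
    le_div_iff₀ (by positivity)]
  exact hcount

theorem tsum_radial_le_of_pairwise_dist_ge {A : Set E} {δ : ℝ} (hδ : 0 < δ)
    (hsep : A.Pairwise fun x y => δ ≤ dist x y) (hmin : ∀ x ∈ A, x ≠ 0 → δ ≤ ‖x‖)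
    {φ : ℝ → ℝ≥0∞} (hφ : AntitoneOn φ (Set.Ici 0)) :
    ∑' a : A, φ ‖(a : E)‖ ≤
      φ 0 + ∑' k : ℕ, ENNReal.ofReal ((2 * k + 5) ^ finrank ℝ E) * φ ((k + 1) * δ) := by
  set shell : A → ℕ := fun a => ⌊‖(a : E)‖ / δ⌋₊
  have mem_shell (a : A) : shell a * δ ≤ ‖(a : E)‖ ∧ ‖(a : E)‖ < (shell a + 1) * δ := by
    have h := (Nat.floor_eq_iff (by positivity : 0 ≤ ‖(a : E)‖ / δ)).1 rfl
    rwa [le_div_iff₀ hδ, div_lt_iff₀ hδ] at h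
  have shell_zero (a : A) (ha : shell a = 0) : (a : E) = 0 := by
    by_contra h
    have := (mem_shell a).2
    rw [ha, Nat.cast_zero, zero_add, one_mul] at this
    linarith [hmin a a.2 h]
  rw [← ENNReal.tsum_fiberwise _ shell, tsum_eq_zero_add' ENNReal.summable]
  refine add_le_add ?_ (ENNReal.tsum_le_tsum fun k => ?_)
  · rw [← one_mul (φ 0)]
    refine ENNReal.tsum_le_mul_of_forall_card_le (fun F => ?_) fun b => ?_
    · exact Nat.cast_le_one.2 <| Finset.card_le_one.2 fun b _ c _ =>
        Subtype.ext <| Subtype.ext <| (shell_zero _ b.2).trans (shell_zero _ c.2).symm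
    · rw [shell_zero _ b.2, norm_zero]
  refine ENNReal.tsum_le_mul_of_forall_card_le (fun F => ?_) fun b => ?_
  · let G := F.map ⟨fun b => (b.1 : E), Subtype.val_injective.comp Subtype.val_injective⟩
    have hG := Finset.card_le_of_pairwise_dist_ge (F := G) (c := 0) (R := (k + 2) * δ) hδ
      (by positivity)
      (by
        simp only [G, Finset.coe_map]
        rintro _ ⟨b, -, rfl⟩ _ ⟨c, -, rfl⟩ hbc
        exact hsep b.1.2 c.1.2 hbc)
      (by
        simp only [G, Finset.coe_map]
        rintro _ ⟨b, -, rfl⟩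
        have := (mem_shell b).2
        rw [show shell b = k + 1 from b.2] at this
        push_cast at this
        rw [Function.Embedding.coeFn_mk, mem_closedBall_zero_iff]
        linarith)
    rw [Finset.card_map, show 2 * ((k + 2) * δ) / δ + 1 = 2 * k + 5 by field_simp; ring] at hG
    rw [← ENNReal.ofReal_natCast]
    exact ENNReal.ofReal_le_ofReal hG
  · have := (mem_shell b).1
    rw [show shell b = k + 1 from b.2] at this
    push_cast at this
    exact hφ (Set.mem_Ici.2 (by positivity)) (norm_nonneg _) this

end FiniteDimensional

theorem gMass_eq_toReal_tsum {E : Type*} [NormedAddCommGroup E] (s : ℝ) (A : Set E) :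
    gMass s A = (∑' a : A, ENNReal.ofReal (Real.exp (-Real.pi * (‖(a : E)‖ / s) ^ 2))).toReal := by
  rw [gMass, ENNReal.tsum_toReal_eq fun _ => ENNReal.ofReal_ne_top]
  simp only [ENNReal.toReal_ofReal (Real.exp_nonneg _)]

theorem antitoneOn_ofReal_gaussian (s : ℝ) :
    AntitoneOn (fun r => ENNReal.ofReal (Real.exp (-Real.pi * (r / s) ^ 2))) (Set.Ici 0) :=
  fun r hr r' _ hrr' => ENNReal.ofReal_le_ofReal <| Real.exp_le_exp.2 <| by
    have := Real.pi_pos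
    have : (r / s) ^ 2 ≤ (r' / s) ^ 2 := by
      rw [div_pow, div_pow]
      gcongr
    nlinarith

theorem shell_bound_le_geometric (n k : ℕ) (hn : 1 ≤ n) :
    (2 * k + 5 : ℝ) ^ n * Real.exp (-Real.pi * ((k + 1) * (2 * √n)) ^ 2)
      ≤ (2 ^ (10 * n))⁻¹ / 2 / 2 ^ k := by
  have h5 : (2 * k + 5 : ℝ) ≤ 5 ^ (k + 1) := by
    have := one_add_mul_le_pow (a := (4 : ℝ)) (by norm_num) (k + 1)
    push_cast at this
    norm_num at this
    linarith
  have hexp : Real.exp (-Real.pi * ((k + 1) * (2 * √n)) ^ 2) ≤ Real.exp (-12) ^ ((k + 1) * n) := by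
    rw [← Real.exp_nat_mul, Real.exp_le_exp, mul_pow, mul_pow, Real.sq_sqrt (Nat.cast_nonneg n)]
    have hk : (k + 1 : ℝ) ≤ (k + 1) ^ 2 := by nlinarith
    have hkn : 0 ≤ ((k : ℝ) + 1) ^ 2 * n := by positivity
    push_cast
    nlinarith [Real.pi_gt_three]
  have he12 : 5 * Real.exp (-12) ≤ 2⁻¹ ^ 11 := by
    have : (2.7 : ℝ) ^ 12 ≤ Real.exp 1 ^ 12 := by
      gcongr
      linarith [Real.exp_one_gt_d9]
    rw [← Real.exp_nat_mul] at this
    rw [Real.exp_neg, ← div_eq_mul_inv, div_le_iff₀ (Real.exp_pos _)]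
    norm_num at this ⊢
    linarith
  calc (2 * k + 5 : ℝ) ^ n * Real.exp (-Real.pi * ((k + 1) * (2 * √n)) ^ 2)
      ≤ (5 ^ (k + 1)) ^ n * Real.exp (-12) ^ ((k + 1) * n) := by gcongr
    _ = (5 * Real.exp (-12)) ^ ((k + 1) * n) := by rw [mul_pow, pow_mul, pow_mul]
    _ ≤ (2⁻¹ ^ 11) ^ ((k + 1) * n) := by gcongr
    _ = 2⁻¹ ^ (11 * ((k + 1) * n)) := by rw [← pow_mul]
    _ ≤ 2⁻¹ ^ (10 * n + (k + 1)) := pow_le_pow_of_le_one (by norm_num) (by norm_num) (by nlinarith)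
    _ = (2 ^ (10 * n))⁻¹ / 2 / 2 ^ k := by
      rw [inv_pow, pow_add, pow_succ]
      field_simp

theorem gMass_at_smoothing_le
    (n : ℕ)
    (L : Submodule ℤ (EuclideanSpace ℝ (Fin n))) [DiscreteTopology L] :
    gMass (lambda1 (L : Set (EuclideanSpace ℝ (Fin n))) / (2 * Real.sqrt n))
        (L : Set (EuclideanSpace ℝ (Fin n)))
      ≤ 1 + ((2 : ℝ) ^ (10 * n))⁻¹ := by
  rcases eq_or_ne L ⊥ with rfl | hL
  · simp [gMass]
  set δ := lambda1 (L : Set (EuclideanSpace ℝ (Fin n)))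
  set s := δ / (2 * √n)
  have hδ : 0 < δ := lambda1_pos L hL
  have hn : 1 ≤ n := by
    obtain ⟨x, -, hx⟩ := L.ne_bot_iff.1 hL
    exact Nat.one_le_iff_ne_zero.2 fun hn => hx (by subst hn; exact Subsingleton.elim _ _)
  have hscale (k : ℕ) : (k + 1) * δ / s = (k + 1) * (2 * √n) := by
    have : 0 < √n := Real.sqrt_pos.2 (by exact_mod_cast hn)
    simp only [s]
    field_simp
  rw [gMass_eq_toReal_tsum]
  refine ENNReal.toReal_le_of_le_ofReal (by positivity) ?_
  calc _ ≤ _ := tsum_radial_le_of_pairwise_dist_ge hδ (fun x hx y hy => lambda1_le_dist L hx hy)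
        (fun x hx => lambda1_le_norm hx) (antitoneOn_ofReal_gaussian s)
    _ ≤ ENNReal.ofReal 1 + ∑' k : ℕ, ENNReal.ofReal ((2 ^ (10 * n))⁻¹ / 2 / 2 ^ k) := by
        refine add_le_add (by simp) (ENNReal.tsum_le_tsum fun k => ?_)
        rw [finrank_euclideanSpace_fin, ← ENNReal.ofReal_mul (by positivity), hscale]
        exact ENNReal.ofReal_le_ofReal (shell_bound_le_geometric n k hn)
    _ = ENNReal.ofReal (1 + (2 ^ (10 * n))⁻¹) := by
        rw [← ENNReal.ofReal_tsum_of_nonneg (fun k => by positivity) (summable_geometric_two' _),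
          tsum_geometric_two', ENNReal.ofReal_add zero_le_one (by positivity)]
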